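/- Let w : {0,…,n}×{0,…,m} → ℝ be a solution of the discrete dorsal-closure scheme: for all interior k and all j < m, (D_t w)^j_k = (1/(1 + ((D₀w)^j_k)²)) · ( (D²w)^j_k + (D₀w)^j_k / L[w^j] ), with boundary and initial conditions w^j_n = 0, w^{j+1}_0 = w^j_0 + δt (D_t w)^j_1, and prescribed initial data w^0. If (δu)² ≥ 2δt and ρ₀ ≥ δu · (1 + ‖(D₊w)^0‖_{L^∞}²), then for all j < m, ‖(D₀w)^{j+1}‖_{L^∞} ≤ ‖(D₊w)^{j+1}‖_{L^∞} ≤ ‖(D₊w)^0‖_{L^∞}. -/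

import Mathlib

noncomputable section

open Finset

/-- The forward difference operator `(D₊v)_k = (v_{k+1} - v_k)/δu`. -/
def dplus (δu : ℝ) (v : ℕ → ℝ) (k : ℕ) : ℝ := (v (k + 1) - v k) / δu

/-- The centred difference operator `(D₀v)_k = (v_{k+1} - v_{k-1})/(2δu)`
(used only at interior indices `k ≥ 1`). -/
def d0 (δu : ℝ) (v : ℕ → ℝ) (k : ℕ) : ℝ := (v (k + 1) - v (k - 1)) / (2 * δu)

/-- The second difference operator
`(D²v)_k = (v_{k+1} - 2v_k + v_{k-1})/δu²`. -/
def d2 (δu : ℝ) (v : ℕ → ℝ) (k : ℕ) : ℝ :=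
  (v (k + 1) - 2 * v k + v (k - 1)) / δu ^ 2

/-- The forward time difference operator `(D_t w)^j_k = (w^{j+1}_k - w^j_k)/δt`
for a mesh function `w` (time index first). -/
def dtime (δt : ℝ) (w : ℕ → ℕ → ℝ) (j k : ℕ) : ℝ := (w (j + 1) k - w j k) / δt

/-- The discrete length functional
`L[v] = δu Σ_{i<n} √(1 + ((D₊v)_i)²)`. -/
def dlen (δu : ℝ) (n : ℕ) (v : ℕ → ℝ) : ℝ :=
  δu * ∑ i ∈ Finset.range n, Real.sqrt (1 + dplus δu v i ^ 2)

/-- The discrete sup-norm (maximum of absolute values) over a finite set of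
spatial indices. -/
def supOn (s : Finset ℕ) (v : ℕ → ℝ) : ℝ := s.fold max 0 (fun k => |v k|)


/-! At an interior node the scheme moves the gradient `g = D₊w` by
`g_k ↦ g_k + (δt/δu) (F(g_k, g_{k+1}) - F(g_{k-1}, g_k))`, where `F` (`flux`) is the right-hand
side of the scheme written through neighbouring gradients. Using
`x/(1+x²) - y/(1+y²) = (1-xy)(x-y)/((1+x²)(1+y²))`, the new `g_k` is a combination of
`g_{k-1}, g_k, g_{k+1}` with weights summing to `1`; the weights are nonnegative because
`δt/δu² ≤ 1/2` controls the centre and `δu/(2L) ≤ 1/(2(1+M²))` (from `L ≥ ρ₀`) keeps the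
drift term `D₀w/L` below the diffusion in the outer ones. At the Dirichlet end the missing
neighbour is `0`, at the Neumann end `g_0` is unchanged, so `max |g|` cannot grow in time;
`D₀w` is an average of two neighbouring values of `D₊w`. -/

theorem supOn_nonneg (s : Finset ℕ) (v : ℕ → ℝ) : 0 ≤ supOn s v :=
  (Finset.le_fold_max _).2 (Or.inl le_rfl)

theorem abs_le_supOn {s : Finset ℕ} {k : ℕ} (v : ℕ → ℝ) (hk : k ∈ s) : |v k| ≤ supOn s v :=
  (Finset.le_fold_max _).2 (Or.inr ⟨k, hk, le_rfl⟩)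

theorem supOn_le {s : Finset ℕ} {c : ℝ} {v : ℕ → ℝ} (hc : 0 ≤ c) (h : ∀ k ∈ s, |v k| ≤ c) :
    supOn s v ≤ c :=
  (Finset.fold_max_le _).2 ⟨hc, h⟩

theorem d0_succ (δu : ℝ) (v : ℕ → ℝ) (q : ℕ) :
    d0 δu v (q + 1) = (dplus δu v q + dplus δu v (q + 1)) / 2 := by
  simp only [d0, dplus, Nat.add_sub_cancel]
  ring

theorem d2_succ (δu : ℝ) (v : ℕ → ℝ) (q : ℕ) :
    d2 δu v (q + 1) = (dplus δu v (q + 1) - dplus δu v q) / δu := by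
  simp only [d2, dplus, Nat.add_sub_cancel]
  ring

theorem supOn_d0_le_supOn_dplus (δu : ℝ) (n : ℕ) (v : ℕ → ℝ) :
    supOn (Icc 1 (n - 1)) (d0 δu v) ≤ supOn (range n) (dplus δu v) := by
  refine supOn_le (supOn_nonneg _ _) fun k hk => ?_
  obtain ⟨q, rfl⟩ : ∃ q, k = q + 1 := ⟨k - 1, by grind⟩
  have hq : q ∈ range n := by grind
  have hq' : q + 1 ∈ range n := by grind
  calc |d0 δu v (q + 1)| = |dplus δu v q + dplus δu v (q + 1)| / 2 := by
        rw [d0_succ, abs_div, abs_two]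
    _ ≤ (|dplus δu v q| + |dplus δu v (q + 1)|) / 2 := by gcongr; exact abs_add_le _ _
    _ ≤ supOn (range n) (dplus δu v) := by
        linarith [abs_le_supOn (dplus δu v) hq, abs_le_supOn (dplus δu v) hq']

theorem mul_le_dlen {δu : ℝ} (hδu : 0 ≤ δu) (n : ℕ) (v : ℕ → ℝ) : δu * n ≤ dlen δu n v := by
  rw [dlen]
  gcongr
  calc (n : ℝ) = ∑ _i ∈ range n, (1 : ℝ) := by simp
    _ ≤ _ := sum_le_sum fun i _ => Real.one_le_sqrt.2 (by nlinarith)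

theorem mul_dtime {δt : ℝ} (hδt : δt ≠ 0) (w : ℕ → ℕ → ℝ) (j k : ℕ) :
    δt * dtime δt w j k = w (j + 1) k - w j k := by
  rw [dtime, mul_div_cancel₀ _ hδt]

theorem abs_mul_add_mul_add_mul_le {p q r x y z M : ℝ} (hp : 0 ≤ p) (hq : 0 ≤ q) (hr : 0 ≤ r)
    (hpqr : p + q + r ≤ 1) (hx : |x| ≤ M) (hy : |y| ≤ M) (hz : |z| ≤ M) :
    |p * x + q * y + r * z| ≤ M := by
  have hM : 0 ≤ M := (abs_nonneg x).trans hx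
  calc |p * x + q * y + r * z| ≤ |p * x| + |q * y| + |r * z| := abs_add_three _ _ _
    _ = p * |x| + q * |y| + r * |z| := by
        rw [abs_mul, abs_mul, abs_mul, abs_of_nonneg hp, abs_of_nonneg hq, abs_of_nonneg hr]
    _ ≤ p * M + q * M + r * M := by gcongr
    _ = (p + q + r) * M := by ring
    _ ≤ M := mul_le_of_le_one_left hM hpqr

def flux (δu L a b : ℝ) : ℝ :=
  (1 + ((a + b) / 2) ^ 2)⁻¹ * ((b - a) / δu + (a + b) / 2 / L)

theorem inv_one_add_sq_le_one (t : ℝ) : (1 + t ^ 2)⁻¹ ≤ 1 :=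
  inv_le_one_of_one_le₀ (by nlinarith [sq_nonneg t])

theorem abs_interior_update_le {δu δt L M g₀ g₁ g₂ : ℝ} (hδu : 0 < δu) (hδt : 0 ≤ δt)
    (hstep : 2 * δt ≤ δu ^ 2) (hL : δu * (1 + M ^ 2) ≤ L)
    (h₀ : |g₀| ≤ M) (h₁ : |g₁| ≤ M) (h₂ : |g₂| ≤ M) :
    |g₁ + δt / δu * (flux δu L g₁ g₂ - flux δu L g₀ g₁)| ≤ M := by
  have hM : 0 ≤ M := (abs_nonneg g₁).trans h₁
  have hL0 : 0 < L := lt_of_lt_of_le (by positivity) hL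
  set x := (g₁ + g₂) / 2
  set y := (g₀ + g₁) / 2
  set a := (1 + y ^ 2)⁻¹
  set b := (1 + x ^ 2)⁻¹
  set c := (1 - x * y) * a * b
  set s := δt / δu ^ 2
  set r := δu / (2 * L)
  have hcomb : g₁ + δt / δu * (flux δu L g₁ g₂ - flux δu L g₀ g₁) =
      s * (a - r * c) * g₀ + (1 - s * (a + b)) * g₁ + s * (b + r * c) * g₂ := by
    simp only [flux, s, r, c, a, b, x, y]
    field_simp
    ring
  have ha : 0 < a := by positivity
  have hb : 0 < b := by positivity
  have ha1 : a ≤ 1 := inv_one_add_sq_le_one y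
  have hb1 : b ≤ 1 := inv_one_add_sq_le_one x
  have hs : s ≤ 1 / 2 := by rw [div_le_iff₀ (by positivity)]; linarith
  have hr : r * (1 + M ^ 2) ≤ 1 / 2 := by
    rw [div_mul_eq_mul_div, div_le_iff₀ (by positivity)]; linarith
  have hxy : |1 - x * y| ≤ 1 + M ^ 2 := by
    rw [abs_le] at h₀ h₁ h₂
    have hx : |x| ≤ M := abs_le.2 ⟨by simp only [x]; linarith, by simp only [x]; linarith⟩
    have hy : |y| ≤ M := abs_le.2 ⟨by simp only [y]; linarith, by simp only [y]; linarith⟩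
    calc |1 - x * y| ≤ 1 + |x| * |y| := by rw [← abs_mul]; simpa using abs_sub (1 : ℝ) (x * y)
      _ ≤ 1 + M ^ 2 := by rw [sq]; gcongr
  have hrc : r * |c| ≤ a * b / 2 := by
    calc r * |c| = r * |1 - x * y| * (a * b) := by
          rw [abs_mul, abs_mul, abs_of_pos ha, abs_of_pos hb]; ring
      _ ≤ r * (1 + M ^ 2) * (a * b) := by gcongr
      _ ≤ 1 / 2 * (a * b) := by gcongr
      _ = a * b / 2 := by ring
  have hab : a * b ≤ a ∧ a * b ≤ b :=
    ⟨mul_le_of_le_one_right ha.le hb1, mul_le_of_le_one_left hb.le ha1⟩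
  have hs0 : 0 ≤ s := by positivity
  have hr0 : 0 ≤ r := by positivity
  have hrc_le : r * c ≤ r * |c| := mul_le_mul_of_nonneg_left (le_abs_self c) hr0
  have hrc_ge : -(r * |c|) ≤ r * c := by
    rw [← mul_neg]; exact mul_le_mul_of_nonneg_left (neg_abs_le c) hr0
  rw [hcomb]
  refine abs_mul_add_mul_add_mul_le ?_ ?_ ?_ (le_of_eq (by ring)) h₀ h₁ h₂
  · exact mul_nonneg hs0 (by linarith)
  · nlinarith
  · exact mul_nonneg hs0 (by linarith)

theorem abs_boundary_update_le {δu δt L M g₀ g₁ : ℝ} (hδu : 0 < δu) (hδt : 0 ≤ δt)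
    (hstep : 2 * δt ≤ δu ^ 2) (hL : δu * (1 + M ^ 2) ≤ L) (h₀ : |g₀| ≤ M) (h₁ : |g₁| ≤ M) :
    |g₁ - δt / δu * flux δu L g₀ g₁| ≤ M := by
  have hM : 0 ≤ M := (abs_nonneg g₁).trans h₁
  have hL0 : 0 < L := lt_of_lt_of_le (by positivity) hL
  set a := (1 + ((g₀ + g₁) / 2) ^ 2)⁻¹
  set s := δt / δu ^ 2
  set r := δu / (2 * L)
  have hcomb : g₁ - δt / δu * flux δu L g₀ g₁ =
      s * a * (1 - r) * g₀ + (1 - s * a * (1 + r)) * g₁ + 2 * s * a * r * 0 := by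
    simp only [flux, s, r, a]
    field_simp
    ring
  have ha : 0 < a := by positivity
  have ha1 : a ≤ 1 := inv_one_add_sq_le_one _
  have hs : s ≤ 1 / 2 := by rw [div_le_iff₀ (by positivity)]; linarith
  have hr : r ≤ 1 / 2 := by rw [div_le_iff₀ (by positivity)]; nlinarith [sq_nonneg M]
  rw [hcomb]
  refine abs_mul_add_mul_add_mul_le ?_ ?_ ?_ ?_ h₀ h₁ (by simpa using hM)
  · exact mul_nonneg (by positivity) (by linarith)
  · have hsa : s * a ≤ 1 / 2 := by nlinarith
    nlinarith [show 0 ≤ s * a from by positivity]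
  · positivity
  · exact le_of_eq (by ring)

theorem eq_add_mul_flux_of_dtime_eq {δu δt L : ℝ} (hδt : δt ≠ 0) {w : ℕ → ℕ → ℝ} {j q : ℕ}
    (h : dtime δt w j (q + 1) = (1 + d0 δu (w j) (q + 1) ^ 2)⁻¹ *
      (d2 δu (w j) (q + 1) + d0 δu (w j) (q + 1) / L)) :
    w (j + 1) (q + 1) =
      w j (q + 1) + δt * flux δu L (dplus δu (w j) q) (dplus δu (w j) (q + 1)) := by
  rw [flux, ← d0_succ, ← d2_succ, ← h, mul_dtime hδt]
  ring

theorem abs_dplus_le_of_step {δu δt L M : ℝ} {n : ℕ} {v v' : ℕ → ℝ} (hδu : 0 < δu)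
    (hδt : 0 ≤ δt) (hstep : 2 * δt ≤ δu ^ 2) (hL : δu * (1 + M ^ 2) ≤ L)
    (hv : ∀ k < n, |dplus δu v k| ≤ M)
    (hupdate : ∀ q, q + 1 < n →
      v' (q + 1) = v (q + 1) + δt * flux δu L (dplus δu v q) (dplus δu v (q + 1)))
    (hD : v n = 0) (hD' : v' n = 0) (hN : v' 0 = v 0 + (v' 1 - v 1)) :
    ∀ k < n, |dplus δu v' k| ≤ M := by
  rintro (_ | q) hq
  · have hgrad : dplus δu v' 0 = dplus δu v 0 := by
      simp only [dplus, zero_add, hN]; ring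
    exact hgrad ▸ hv 0 hq
  rcases (show q + 2 < n ∨ q + 2 = n by omega) with hint | rfl
  · have hgrad : dplus δu v' (q + 1) = dplus δu v (q + 1) + δt / δu *
        (flux δu L (dplus δu v (q + 1)) (dplus δu v (q + 2)) -
          flux δu L (dplus δu v q) (dplus δu v (q + 1))) := by
      rw [dplus, hupdate (q + 1) hint, hupdate q hq, dplus]
      ring
    rw [hgrad]
    exact abs_interior_update_le hδu hδt hstep hL (hv q (by omega)) (hv (q + 1) hq)
      (hv (q + 2) hint)
  · have hgrad : dplus δu v' (q + 1) =
        dplus δu v (q + 1) - δt / δu * flux δu L (dplus δu v q) (dplus δu v (q + 1)) := by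
      simp only [dplus] at hupdate ⊢
      rw [hD', hupdate q hq, hD]
      ring
    rw [hgrad]
    exact abs_boundary_update_le hδu hδt hstep hL (hv q (by omega)) (hv (q + 1) hq)

theorem discrete_gradient_max_principle_general (ρ₀ T : ℝ) (hρ : 0 < ρ₀) (hT : 0 < T)
    (n m : ℕ) (hn : 0 < n) (w : ℕ → ℕ → ℝ)
    (hscheme : ∀ j, j < m → ∀ k, 0 < k → k < n →
      dtime (T / m) w j k =
        (1 + d0 (ρ₀ / n) (w j) k ^ 2)⁻¹ *
          (d2 (ρ₀ / n) (w j) k + d0 (ρ₀ / n) (w j) k / dlen (ρ₀ / n) n (w j)))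
    (hbcD : ∀ j, j ≤ m → w j n = 0)
    (hbcN : ∀ j, j < m → w (j + 1) 0 = w j 0 + (T / m) * dtime (T / m) w j 1)
    (hstep : (ρ₀ / n) ^ 2 ≥ 2 * (T / m))
    (hsmall : ρ₀ ≥ (ρ₀ / n) *
      (1 + supOn (Finset.range n) (dplus (ρ₀ / n) (w 0)) ^ 2)) :
    ∀ j, j < m →
      supOn (Finset.Icc 1 (n - 1)) (d0 (ρ₀ / n) (w (j + 1))) ≤
          supOn (Finset.range n) (dplus (ρ₀ / n) (w (j + 1))) ∧
      supOn (Finset.range n) (dplus (ρ₀ / n) (w (j + 1))) ≤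
          supOn (Finset.range n) (dplus (ρ₀ / n) (w 0)) := by
  intro j hj
  have hm : 0 < m := by omega
  set δu := ρ₀ / n
  set δt := T / m
  set M := supOn (range n) (dplus δu (w 0))
  have hδu : 0 < δu := by positivity
  have hδt : 0 < δt := by positivity
  have hL : ∀ i, δu * (1 + M ^ 2) ≤ dlen δu n (w i) := fun i =>
    hsmall.trans (div_mul_cancel₀ ρ₀ (by positivity : (n : ℝ) ≠ 0) ▸ mul_le_dlen hδu.le n (w i))
  have hbound : ∀ i ≤ m, ∀ k < n, |dplus δu (w i) k| ≤ M := by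
    intro i hi
    induction i with
    | zero => exact fun k hk => abs_le_supOn _ (mem_range.2 hk)
    | succ i ih =>
      have hi' : i < m := by omega
      exact abs_dplus_le_of_step hδu hδt.le hstep (hL i) (ih hi'.le)
        (fun q hq => eq_add_mul_flux_of_dtime_eq hδt.ne' (hscheme i hi' (q + 1) q.succ_pos hq))
        (hbcD i hi'.le) (hbcD (i + 1) hi) (by rw [hbcN i hi', mul_dtime hδt.ne'])
  exact ⟨supOn_d0_le_supOn_dplus δu n _,
    supOn_le (supOn_nonneg _ _) fun k hk => hbound (j + 1) hj k (mem_range.1 hk)⟩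

/-- Theorem 6.6, maximum principle for the discrete
gradient: if `w` solves the discrete dorsal-closure scheme with boundary
conditions `w^j_n = 0` and `w^{j+1}_0 = w^j_0 + δt (D_t w)^j_1`, and the steps
satisfy `δu² ≥ 2δt` and `ρ₀ ≥ δu (1 + ‖(D₊w)^0‖_∞²)`, then for all `j < m`
`‖(D₀w)^{j+1}‖_∞ ≤ ‖(D₊w)^{j+1}‖_∞ ≤ ‖(D₊w)^0‖_∞`. -/
theorem discrete_gradient_max_principle (ρ₀ T : ℝ) (hρ : 0 < ρ₀) (hT : 0 < T)
    (n m : ℕ) (hn : 0 < n) (hm : 0 < m) (w : ℕ → ℕ → ℝ)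
    (hscheme : ∀ j, j < m → ∀ k, 0 < k → k < n →
      dtime (T / m) w j k =
        (1 + d0 (ρ₀ / n) (w j) k ^ 2)⁻¹ *
          (d2 (ρ₀ / n) (w j) k + d0 (ρ₀ / n) (w j) k / dlen (ρ₀ / n) n (w j)))
    (hbcD : ∀ j, j ≤ m → w j n = 0)
    (hbcN : ∀ j, j < m → w (j + 1) 0 = w j 0 + (T / m) * dtime (T / m) w j 1)
    (hstep : (ρ₀ / n) ^ 2 ≥ 2 * (T / m))
    (hsmall : ρ₀ ≥ (ρ₀ / n) *
      (1 + supOn (Finset.range n) (dplus (ρ₀ / n) (w 0)) ^ 2)) :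
    ∀ j, j < m →
      supOn (Finset.Icc 1 (n - 1)) (d0 (ρ₀ / n) (w (j + 1))) ≤
          supOn (Finset.range n) (dplus (ρ₀ / n) (w (j + 1))) ∧
      supOn (Finset.range n) (dplus (ρ₀ / n) (w (j + 1))) ≤
          supOn (Finset.range n) (dplus (ρ₀ / n) (w 0)) :=
  discrete_gradient_max_principle_general ρ₀ T hρ hT n m hn w hscheme hbcD hbcN hstep hsmall
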